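/- arXiv:1412.2034 — 2 statements merged into one kernel-verified Lean document; each statement's English description precedes it below -/
import Mathlib

section
/- For every finite simple graph G with at least one edge, b(G) ≤ bg(G) ≤ 2·b(G) − 1 and b(G) ≤ b̂g(G) ≤ 2·b(G). -/
/-!
Two firing sequences for the same configuration can be merged into one, so the vertices cleaned
from a configuration `c` all lie on a single firing sequence, and a finished game leaves a
configuration that cleans `G`; this gives `b(G)` as a lower bound.

For the upper bounds fix `f` cleaning `G` with `∑ f = b(G)`. While the game is not over, some
dirty vertex carries fewer brushes than under `f`: otherwise the firing sequence of `f` could be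
replayed. Min always brushes such a vertex, so the deficit `∑ w, (f w - c w)`, initially `b(G)`,
drops with each of her moves and never rises; hence Min moves at most `b(G)` times, and Max at
most once between two of her moves.
-/

open Classical

namespace BrushGame

variable {V : Type*}

/-- The number of neighbours of `x` in `G` that belong to the list `l`. -/
noncomputable def nbr [Fintype V] (G : SimpleGraph V) (x : V) (l : List V) : ℕ :=
  (Finset.univ.filter (fun u => G.Adj x u ∧ u ∈ l)).card

/-- The degree of `x` in `G`. -/
noncomputable def deg [Fintype V] (G : SimpleGraph V) (x : V) : ℕ :=
  (Finset.univ.filter (fun u => G.Adj x u)).card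

/-- `l` is a valid sequence of vertex firings starting from the brush assignment `c`:
the vertices of `l` fire in order; when a vertex fires, the number of brushes on it
(those from `c` plus one from each previously fired neighbour) is at least its number of
still-dirty neighbours. -/
def FiringSeq [Fintype V] (G : SimpleGraph V) (c : V → ℕ) (l : List V) : Prop :=
  l.Nodup ∧ ∀ i : Fin l.length,
    deg G (l.get i) ≤ c (l.get i) + 2 * nbr G (l.get i) (l.take i.1)

/-- Vertex `v` gets cleaned, starting from the assignment `c` of brushes. -/
def Cleaned [Fintype V] (G : SimpleGraph V) (c : V → ℕ) (v : V) : Prop :=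
  ∃ l, FiringSeq G c l ∧ v ∈ l

/-- All vertices are clean, i.e. the game is over. -/
def Over [Fintype V] (G : SimpleGraph V) (c : V → ℕ) : Prop := ∀ v, Cleaned G c v

/-- An upper bound on the number of turns of any brushing game on `G` (plus one). -/
noncomputable def fuel [Fintype V] (G : SimpleGraph V) : ℕ := (∑ v, deg G v) + 1

/-- The value (number of brushes placed from now on, under optimal play) of the brushing
game on `G` from the brush assignment `c`, with `n` turns of fuel remaining;
`mover = true` means that it is Min's turn to place a brush (on a dirty vertex),
`mover = false` that it is Max's turn.  The fuel never runs out along legal play when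
the game is started with fuel `fuel G`. -/
noncomputable def val [Fintype V] (G : SimpleGraph V) : Bool → ℕ → (V → ℕ) → ℕ
  | _, 0, _ => 0
  | mover, n + 1, c =>
    if Over G c then 0
    else if mover then
      1 + sInf {k | ∃ v, ¬ Cleaned G c v ∧ k = val G false n (Function.update c v (c v + 1))}
    else
      1 + sSup {k | ∃ v, ¬ Cleaned G c v ∧ k = val G true n (Function.update c v (c v + 1))}

/-- The game brush number of `G` starting from the initial configuration `f`, Min to move. -/
noncomputable def bgFrom [Fintype V] (G : SimpleGraph V) (f : V → ℕ) : ℕ :=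
  val G true (fuel G) f

/-- The game brush number of `G` starting from the initial configuration `f`, Max to move. -/
noncomputable def bghatFrom [Fintype V] (G : SimpleGraph V) (f : V → ℕ) : ℕ :=
  val G false (fuel G) f

/-- The (Min-start) game brush number of `G`. -/
noncomputable def bg [Fintype V] (G : SimpleGraph V) : ℕ := bgFrom G (fun _ => 0)

/-- The Max-start game brush number of `G`. -/
noncomputable def bghat [Fintype V] (G : SimpleGraph V) : ℕ := bghatFrom G (fun _ => 0)

/-- `G` can be cleaned by the configuration `f`. -/
def CleansBy [Fintype V] (G : SimpleGraph V) (f : V → ℕ) : Prop :=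
  ∃ l, FiringSeq G f l ∧ ∀ v : V, v ∈ l

/-- The brush number of `G`. -/
noncomputable def bNum [Fintype V] (G : SimpleGraph V) : ℕ :=
  sInf {k | ∃ f, CleansBy G f ∧ k = ∑ v, f v}

variable [Fintype V] {G : SimpleGraph V} {c f g : V → ℕ} {l m : List V} {v x : V}

lemma firingSeq_nil : FiringSeq G c [] := ⟨List.nodup_nil, fun i => i.elim0⟩

lemma firingSeq_append_singleton_iff :
    FiringSeq G c (l ++ [x]) ↔
      FiringSeq G c l ∧ x ∉ l ∧ deg G x ≤ c x + 2 * nbr G x l := by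
  have get_left (i : Fin l.length) :
      (l ++ [x]).get ⟨i, by simp⟩ = l.get i ∧ (l ++ [x]).take i = l.take i := by
    simp [List.getElem_append_left, List.take_append_of_le_length i.2.le]
  have get_last : (l ++ [x]).get ⟨l.length, by simp⟩ = x ∧ (l ++ [x]).take l.length = l := by
    simp
  simp only [FiringSeq, List.nodup_append, List.nodup_singleton, List.mem_singleton]
  constructor
  · rintro ⟨⟨hl, -, hx⟩, hfire⟩
    refine ⟨⟨hl, fun i => ?_⟩, fun h => hx x h x rfl rfl, ?_⟩
    · simpa only [get_left] using hfire ⟨i, by simp⟩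
    · simpa only [get_last] using hfire ⟨l.length, by simp⟩
  · rintro ⟨⟨hl, hfire⟩, hx, hlast⟩
    refine ⟨⟨hl, trivial, fun a ha b hb hab => hx (hb ▸ hab ▸ ha)⟩, fun ⟨i, hi⟩ => ?_⟩
    obtain hi | rfl : i < l.length ∨ i = l.length := Nat.lt_or_eq_of_le (by simpa using hi)
    · simpa only [get_left ⟨i, hi⟩] using hfire ⟨i, hi⟩
    · simpa only [get_last] using hlast

lemma nbr_mono (h : l ⊆ m) : nbr G x l ≤ nbr G x m :=
  Finset.card_le_card fun u hu => by
    simp only [Finset.mem_filter, Finset.mem_univ, true_and] at hu ⊢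
    exact ⟨hu.1, h hu.2⟩

lemma deg_eq_zero_iff : deg G v = 0 ↔ ∀ u, ¬ G.Adj v u := by
  simp [deg, Finset.filter_eq_empty_iff]

lemma FiringSeq.exists_superset (hl : FiringSeq G c l) (hm : FiringSeq G c m) :
    ∃ l', FiringSeq G c l' ∧ l ⊆ l' ∧ m ⊆ l' := by
  induction m using List.reverseRecOn with
  | nil => exact ⟨l, hl, List.Subset.refl l, List.nil_subset l⟩
  | append_singleton m x ih =>
    rw [firingSeq_append_singleton_iff] at hm
    obtain ⟨hm, -, hx⟩ := hm
    obtain ⟨l', hl', hll', hml'⟩ := ih hm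
    by_cases hxl' : x ∈ l'
    · exact ⟨l', hl', hll', List.append_subset.mpr ⟨hml', by simpa using hxl'⟩⟩
    · have hx' : deg G x ≤ c x + 2 * nbr G x l' := hx.trans (by grw [nbr_mono hml'])
      exact ⟨l' ++ [x], firingSeq_append_singleton_iff.mpr ⟨hl', hxl', hx'⟩,
        List.Subset.trans hll' (List.subset_append_left _ _),
        List.append_subset.mpr ⟨List.Subset.trans hml' (List.subset_append_left _ _), by simp⟩⟩

lemma exists_firingSeq_superset_of_cleaned (s : List V) (h : ∀ v ∈ s, Cleaned G c v) :
    ∃ l, FiringSeq G c l ∧ s ⊆ l := by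
  induction s with
  | nil => exact ⟨[], firingSeq_nil, List.nil_subset _⟩
  | cons a s ih =>
    obtain ⟨l, hl, hsl⟩ := ih fun v hv => h v (List.mem_cons_of_mem a hv)
    obtain ⟨m, hm, ham⟩ := h a List.mem_cons_self
    obtain ⟨l', hl', hll', hml'⟩ := hl.exists_superset hm
    exact ⟨l', hl', List.cons_subset.mpr ⟨hml' ham, List.Subset.trans hsl hll'⟩⟩

lemma cleansBy_of_over (h : Over G c) : CleansBy G c := by
  obtain ⟨l, hl, hsub⟩ := exists_firingSeq_superset_of_cleaned Finset.univ.toList fun v _ => h v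
  exact ⟨l, hl, fun v => hsub (Finset.mem_toList.mpr (Finset.mem_univ v))⟩

lemma cleaned_of_deg_le (h : deg G v ≤ c v) : Cleaned G c v :=
  ⟨[] ++ [v], firingSeq_append_singleton_iff.mpr ⟨firingSeq_nil, List.not_mem_nil, by simpa [nbr]⟩,
    List.mem_append_right _ (List.mem_singleton_self v)⟩

lemma lt_deg_of_not_cleaned (h : ¬ Cleaned G c v) : c v < deg G v :=
  lt_of_not_ge fun hle => h (cleaned_of_deg_le hle)

/-- Each vertex of the sequence is either already clean, or can be appended to a firing sequence
for `c` containing its predecessors, which are clean by induction. -/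
lemma FiringSeq.cleaned_of_le (hl : FiringSeq G f l) (h : ∀ v, ¬ Cleaned G c v → f v ≤ c v) :
    ∀ v ∈ l, Cleaned G c v := by
  induction l using List.reverseRecOn with
  | nil => simp
  | append_singleton l x ih =>
    rw [firingSeq_append_singleton_iff] at hl
    obtain ⟨hl, -, hx⟩ := hl
    obtain ⟨M, hM, hlM⟩ := exists_firingSeq_superset_of_cleaned l (ih hl)
    intro v hv
    obtain hv | rfl := List.mem_append.mp hv |>.imp_right List.mem_singleton.mp
    · exact ih hl v hv
    by_contra hdirty
    have hvM : v ∉ M := fun hvM => hdirty ⟨M, hM, hvM⟩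
    have hv' : deg G v ≤ c v + 2 * nbr G v M := by
      grw [hx, h v hdirty, nbr_mono hlM]
    exact hdirty ⟨M ++ [v], firingSeq_append_singleton_iff.mpr ⟨hM, hvM, hv'⟩,
      List.mem_append_right _ (List.mem_singleton_self v)⟩

lemma exists_lt_of_not_over (hf : CleansBy G f) (h : ¬ Over G c) :
    ∃ v, ¬ Cleaned G c v ∧ c v < f v := by
  by_contra! hle
  obtain ⟨l, hl, hall⟩ := hf
  exact h fun v => hl.cleaned_of_le hle v (hall v)

lemma FiringSeq.deg_eq_zero (hl : FiringSeq G 0 l) : ∀ v ∈ l, deg G v = 0 := by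
  induction l using List.reverseRecOn with
  | nil => simp
  | append_singleton l x ih =>
    rw [firingSeq_append_singleton_iff] at hl
    obtain ⟨hl, -, hx⟩ := hl
    intro v hv
    obtain hv | rfl := List.mem_append.mp hv |>.imp_right List.mem_singleton.mp
    · exact ih hl v hv
    have no_fired_nbr : nbr G v l = 0 := by
      refine Finset.card_eq_zero.mpr (Finset.filter_eq_empty_iff.mpr ?_)
      rintro u - ⟨hvu, hu⟩
      exact deg_eq_zero_iff.mp (ih hl u hu) v hvu.symm
    simpa [no_fired_nbr] using hx

lemma not_cleansBy_zero (hedge : ∃ u v : V, G.Adj u v) : ¬ CleansBy G 0 := by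
  rintro ⟨l, hl, hall⟩
  obtain ⟨u, v, huv⟩ := hedge
  exact deg_eq_zero_iff.mp (hl.deg_eq_zero u (hall u)) v huv

lemma cleansBy_deg : CleansBy G (deg G) :=
  ⟨Finset.univ.toList, ⟨Finset.nodup_toList _, fun _ => Nat.le_add_right _ _⟩, by simp⟩

lemma bNum_le_sum (hf : CleansBy G f) : bNum G ≤ ∑ v, f v :=
  Nat.sInf_le ⟨f, hf, rfl⟩

lemma exists_cleansBy_sum_eq_bNum : ∃ f, CleansBy G f ∧ ∑ v, f v = bNum G := by
  obtain ⟨f, hf, hsum⟩ := Nat.sInf_mem (⟨_, deg G, cleansBy_deg, rfl⟩ :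
    {k | ∃ f, CleansBy G f ∧ k = ∑ v, f v}.Nonempty)
  exact ⟨f, hf, hsum.symm⟩

lemma one_le_bNum (hedge : ∃ u v : V, G.Adj u v) : 1 ≤ bNum G := by
  obtain ⟨f, hf, hsum⟩ := exists_cleansBy_sum_eq_bNum (G := G)
  refine Nat.one_le_iff_ne_zero.mpr fun hzero => not_cleansBy_zero hedge ?_
  have : f = 0 := funext fun v => Finset.sum_eq_zero_iff.mp (hsum.trans hzero) v (Finset.mem_univ v)
  exact this ▸ hf

noncomputable def addBrush (c : V → ℕ) (v : V) : V → ℕ := Function.update c v (c v + 1)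

omit [Fintype V] in
lemma addBrush_eq_add_single (c : V → ℕ) (v : V) : addBrush c v = c + Pi.single v 1 := by
  ext w
  rcases eq_or_ne w v with rfl | hw <;> simp [addBrush, *]

lemma sum_addBrush (c : V → ℕ) (v : V) : ∑ w, addBrush c v w = ∑ w, c w + 1 := by
  simp [addBrush_eq_add_single, Finset.sum_add_distrib]

lemma sum_tsub_addBrush_add_one (h : c v < g v) :
    ∑ w, (g w - addBrush c v w) + 1 = ∑ w, (g w - c w) := by
  have pointwise (w : V) : g w - addBrush c v w + (Pi.single v 1 : V → ℕ) w = g w - c w := by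
    rcases eq_or_ne w v with rfl | hw
    · simp [addBrush_eq_add_single]; omega
    · simp [addBrush_eq_add_single, hw]
  rw [← Finset.sum_congr rfl fun w _ => pointwise w, Finset.sum_add_distrib]
  simp

lemma sum_tsub_addBrush_le (g c : V → ℕ) (v : V) :
    ∑ w, (g w - addBrush c v w) ≤ ∑ w, (g w - c w) :=
  Finset.sum_le_sum fun w _ => Nat.sub_le_sub_left (by simp [addBrush_eq_add_single]) _

lemma val_succ_of_over (mover : Bool) (n : ℕ) (h : Over G c) : val G mover (n + 1) c = 0 := by
  rw [val, if_pos h]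

lemma val_true_succ_le (n : ℕ) (hv : ¬ Cleaned G c v) :
    val G true (n + 1) c ≤ 1 + val G false n (addBrush c v) := by
  rw [val, if_neg fun h => hv (h v), if_pos rfl]
  gcongr
  exact Nat.sInf_le ⟨v, hv, rfl⟩

lemma exists_val_succ_eq (mover : Bool) (n : ℕ) (h : ¬ Over G c) :
    ∃ v, ¬ Cleaned G c v ∧ val G mover (n + 1) c = 1 + val G (!mover) n (addBrush c v) := by
  obtain ⟨v₀, hv₀⟩ : ∃ v, ¬ Cleaned G c v := by simpa [Over] using h
  rw [val, if_neg h]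
  cases mover
  · let S := {k | ∃ v, ¬ Cleaned G c v ∧ k = val G true n (addBrush c v)}
    have hfin : S.Finite := (Set.finite_range fun v => val G true n (addBrush c v)).subset
      fun k ⟨v, _, hk⟩ => ⟨v, hk.symm⟩
    obtain ⟨v, hv, hmax⟩ : sSup S ∈ S := Set.Nonempty.csSup_mem ⟨_, v₀, hv₀, rfl⟩ hfin
    exact ⟨v, hv, congrArg (1 + ·) hmax⟩
  · let S := {k | ∃ v, ¬ Cleaned G c v ∧ k = val G false n (addBrush c v)}
    obtain ⟨v, hv, hmin⟩ : sInf S ∈ S := Nat.sInf_mem ⟨_, v₀, hv₀, rfl⟩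
    exact ⟨v, hv, congrArg (1 + ·) hmin⟩

/-- A move brushes a dirty vertex `v`, where `c v < deg G v`, so it lowers `∑ w, (deg G w - c w)`;
hence the fuel `n` never runs out before the game is over. -/
lemma bNum_le_sum_add_val (mover : Bool) (n : ℕ) (c : V → ℕ)
    (hn : ∑ w, (deg G w - c w) < n) : bNum G ≤ ∑ w, c w + val G mover n c := by
  induction n generalizing mover c with
  | zero => omega
  | succ n ih =>
    by_cases hover : Over G c
    · rw [val_succ_of_over mover n hover]
      exact bNum_le_sum (cleansBy_of_over hover)
    obtain ⟨v, hv, hval⟩ := exists_val_succ_eq mover n hover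
    have hdrop := sum_tsub_addBrush_add_one (lt_deg_of_not_cleaned hv)
    have hnext := ih (!mover) (addBrush c v) (by omega)
    rw [sum_addBrush] at hnext
    omega

lemma val_le_of_cleansBy (hf : CleansBy G f) (n : ℕ) (c : V → ℕ) :
    val G true n c ≤ 2 * ∑ w, (f w - c w) - 1 ∧ val G false n c ≤ 2 * ∑ w, (f w - c w) := by
  induction n generalizing c with
  | zero => simp [val]
  | succ n ih =>
    by_cases hover : Over G c
    · simp [val_succ_of_over _ n hover]
    obtain ⟨v, hv, hlt⟩ := exists_lt_of_not_over hf hover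
    obtain ⟨u, -, hmax⟩ := exists_val_succ_eq false n hover
    have hmin := val_true_succ_le n hv
    have hdrop := sum_tsub_addBrush_add_one hlt
    have hmono := sum_tsub_addBrush_le f c u
    have hmin_next := (ih (addBrush c v)).2
    have hmax_next := (ih (addBrush c u)).1
    rw [Bool.not_false] at hmax
    omega

end BrushGame

/-- For every finite simple graph `G` with at least one edge,
`b(G) ≤ bg(G) ≤ 2·b(G) − 1` and `b(G) ≤ b̂g(G) ≤ 2·b(G)`. -/
theorem brush_number_le_game_brush_number {V : Type*} [Fintype V] (G : SimpleGraph V)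
    (hedge : ∃ u v : V, G.Adj u v) :
    BrushGame.bNum G ≤ BrushGame.bg G ∧
      (BrushGame.bg G : ℤ) ≤ 2 * (BrushGame.bNum G : ℤ) - 1 ∧
      BrushGame.bNum G ≤ BrushGame.bghat G ∧
      BrushGame.bghat G ≤ 2 * BrushGame.bNum G := by
  open BrushGame in
  obtain ⟨f, hf, hfb⟩ := exists_cleansBy_sum_eq_bNum (G := G)
  have hb : 1 ≤ bNum G := one_le_bNum hedge
  have hfuel : ∑ w, (deg G w - 0) < fuel G := by simp [fuel]
  have lower_min := bNum_le_sum_add_val true (fuel G) (fun _ => 0) hfuel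
  have lower_max := bNum_le_sum_add_val false (fuel G) (fun _ => 0) hfuel
  obtain ⟨upper_min, upper_max⟩ := val_le_of_cleansBy hf (fuel G) (fun _ => 0)
  simp only [Finset.sum_const_zero, Nat.sub_zero, zero_add, hfb]
    at lower_min lower_max upper_min upper_max
  simp only [bg, bghat, bgFrom, bghatFrom]
  omega
end

section
/- Let G be a finite simple graph and f : V(G) → ℕ a configuration by which G can be cleaned. Then every maximal sequence of vertex firings starting from f (i.e., every sequence of legal firings that cannot be extended by any further firing) cleans all vertices of G. -/
open Classical

/-!
Let `m` be a firing sequence that cleans `G` and let `x` be the first vertex of `m` that a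
maximal firing sequence `l` misses. Everything fired before `x` in `m` is also fired in `l`,
so after `l` the vertex `x` has received at least as many brushes from fired neighbours as
when it fired in `m`; hence `x` could still fire after `l`, contradicting maximality.
-/

namespace BrushGame

variable {V : Type*} [Fintype V]

theorem nbr_mono_s19 (G : SimpleGraph V) (x : V) {l₁ l₂ : List V} (h : l₁ ⊆ l₂) :
    nbr G x l₁ ≤ nbr G x l₂ :=
  Finset.card_le_card fun _ hu => by
    simp only [Finset.mem_filter, Finset.mem_univ, true_and] at hu ⊢
    exact ⟨hu.1, h hu.2⟩

theorem FiringSeq.le_of_eq_append_cons {G : SimpleGraph V} {c : V → ℕ} {p s : List V} {x : V}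
    (h : FiringSeq G c (p ++ x :: s)) : deg G x ≤ c x + 2 * nbr G x p := by
  have hfire := h.2 ⟨p.length, by simp⟩
  simpa [List.take_left'] using hfire

theorem FiringSeq.append_singleton {G : SimpleGraph V} {c : V → ℕ} {l : List V} {x : V}
    (hl : FiringSeq G c l) (hx : x ∉ l) (hfire : deg G x ≤ c x + 2 * nbr G x l) :
    FiringSeq G c (l ++ [x]) := by
  refine ⟨hl.1.append (List.nodup_singleton x) (by simpa using hx), fun i => ?_⟩
  rcases Nat.lt_or_ge i.1 l.length with hi | hi
  · simpa [List.getElem_append_left hi, List.take_append_of_le_length hi.le] using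
      hl.2 ⟨i.1, hi⟩
  · have hi : i.1 = l.length := by
      have := i.2
      simp only [List.length_append, List.length_singleton] at this
      omega
    simpa [hi] using hfire

end BrushGame

theorem List.exists_eq_append_cons_of_not_subset {α : Type*} {m l : List α} (h : ¬ m ⊆ l) :
    ∃ p x s, m = p ++ x :: s ∧ p ⊆ l ∧ x ∉ l := by
  induction m with
  | nil => exact absurd (List.nil_subset l) h
  | cons y m ih =>
    by_cases hy : y ∈ l
    · obtain ⟨p, x, s, rfl, hp, hx⟩ := ih fun hm => h (List.cons_subset.2 ⟨hy, hm⟩)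
      exact ⟨y :: p, x, s, rfl, List.cons_subset.2 ⟨hy, hp⟩, hx⟩
    · exact ⟨[], y, m, rfl, List.nil_subset l, hy⟩

/-- If `G` can be cleaned by the configuration `f`, then every maximal
sequence of vertex firings starting from `f` (one that cannot be extended by any further
firing) cleans all vertices of `G`. -/
theorem maximal_firing_sequence_cleans {V : Type*} [Fintype V] (G : SimpleGraph V)
    (f : V → ℕ) (hclean : BrushGame.CleansBy G f)
    (l : List V) (hl : BrushGame.FiringSeq G f l)
    (hmax : ∀ v, ¬ BrushGame.FiringSeq G f (l ++ [v])) :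
    ∀ v : V, v ∈ l := by
  obtain ⟨m, hm, hm_all⟩ := hclean
  suffices m ⊆ l from fun v => this (hm_all v)
  by_contra hml
  obtain ⟨p, x, s, rfl, hpl, hxl⟩ := List.exists_eq_append_cons_of_not_subset hml
  have hfire : BrushGame.deg G x ≤ f x + 2 * BrushGame.nbr G x l :=
    hm.le_of_eq_append_cons.trans (by gcongr; exact BrushGame.nbr_mono_s19 G x hpl)
  exact hmax x (hl.append_singleton hxl hfire)
end
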